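/- Let X be a topological space, W ⊆ K ⊆ X with K closed, W open in K, and suppose closure(W) \ bd_K(closure W) is disjoint from closure(X \ closure(W)) in X, where bd_K denotes the frontier taken in K. Then closure(W) \ bd_K(closure W) is open in X. -/
import Mathlib


open Set

/-- The step in the proof of Theorem 1.1: if `closure W \ bd_K(closure W)` is disjoint
from `closure (X \ closure W)`, then it is open in `X`. Here `bd_K` denotes the frontier
in the subspace topology of `K`. -/
theorem stmt17 {X : Type*} [TopologicalSpace X] (K W : Set X)
    (hK : IsClosed K) (hWK : W ⊆ K)
    (hWopen : IsOpen ((↑) ⁻¹' W : Set K))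
    (bdK : Set X)
    (hbdK : bdK = Subtype.val '' (frontier ((↑) ⁻¹' (closure W) : Set K)))
    (hdisj : Disjoint (closure W \ bdK) (closure (closure W)ᶜ)) :
    IsOpen (closure W \ bdK) := by
  have hset : closure W \ bdK = interior (closure W) := by
    apply Subset.antisymm
    · intro x hx
      have h := Set.disjoint_left.mp hdisj hx
      rwa [closure_compl, mem_compl_iff, not_not] at h
    · intro x hx
      refine ⟨interior_subset hx, ?_⟩
      rw [hbdK]
      rintro ⟨y, hy, rfl⟩
      have hmono : ((↑) ⁻¹' (interior (closure W)) : Set K) ⊆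
          interior ((↑) ⁻¹' (closure W) : Set K) :=
        interior_maximal (preimage_mono interior_subset)
          (isOpen_interior.preimage continuous_subtype_val)
      exact hy.2 (hmono hx)
  rw [hset]
  exact isOpen_interior
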